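/- Let α > 0 and let N ≥ 1 be an integer. Define p(i,j) for integers i ≥ 1 and j ∈ ℤ by p(1,1) := 1, p(1,j) := 0 for j ≠ 1, and the Chinese restaurant recursion p(i+1,j) = ((Nα − (j−1)α)/(Nα + i))·p(i,j−1) + (1 − (Nα − jα)/(Nα + i))·p(i,j). Then for all 1 ≤ j ≤ i: p(i,j) = (Nα|α)_j · S_α(i,j) / [Nα]_i, where (x|y)_n := Π_{k=0}^{n−1}(x − ky), [x]_n := Π_{k=0}^{n−1}(x + k), and S_α(i,j) := S(i,j;−1,α,0) are the generalized Stirling numbers defined by S_α(0,0) = 1, S_α(i,j) = 0 for j < 0 or j > i, and S_α(i+1,j) = S_α(i,j−1) + (i + αj)·S_α(i,j). -/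
import Mathlib


/-- the generalized Stirling numbers `S(i,j; a,b,r)` of Hsu and Shiue, defined by
`S(0,0) = 1`, `S(i,j) = 0` for `j > i` (automatic below), and the recursion
`S(i+1,j) = S(i,j-1) + (jb - ia + r) S(i,j)` (with `S(i,-1) := 0`). -/
noncomputable def gstir (a b r : ℝ) : ℕ → ℕ → ℝ
  | 0, 0 => 1
  | 0, _ + 1 => 0
  | i + 1, 0 => (r - i * a) * gstir a b r i 0
  | i + 1, j + 1 => gstir a b r i j + (((j : ℝ) + 1) * b - i * a + r) * gstir a b r i (j + 1)

/-- the generalized factorial `(x|y)_n := ∏_{k=0}^{n-1} (x - k y)`. -/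
noncomputable def genFall (x y : ℝ) (n : ℕ) : ℝ := ∏ k ∈ Finset.range n, (x - k * y)

/-- the rising factorial `[x]_n := x (x+1) ⋯ (x+n-1)`. -/
noncomputable def risingFac (x : ℝ) (n : ℕ) : ℝ := ∏ k ∈ Finset.range n, (x + k)

/-- the Chinese restaurant recursion with `N` tables and parameters `κ = α`, `θ = Nα`:
`p(1,1) = 1`, `p(1,j) = 0` for `j ≠ 1`, and
`p(i+1,j) = ((Nα - (j-1)α)/(Nα + i)) p(i,j-1) + (1 - (Nα - jα)/(Nα + i)) p(i,j)`. -/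
noncomputable def crp (α : ℝ) (N : ℕ) : ℕ → ℤ → ℝ
  | 0, _ => 0
  | 1, j => if j = 1 then 1 else 0
  | i + 2, j =>
      (((N : ℝ) * α - ((j : ℝ) - 1) * α) / ((N : ℝ) * α + ((i : ℝ) + 1))) *
          crp α N (i + 1) (j - 1) +
        (1 - ((N : ℝ) * α - (j : ℝ) * α) / ((N : ℝ) * α + ((i : ℝ) + 1))) * crp α N (i + 1) j


lemma crp_lt_one (α : ℝ) (N : ℕ) : ∀ i : ℕ, ∀ j : ℤ, j < 1 → crp α N i j = 0
  | 0, j, _ => rfl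
  | 1, j, hj => by
      rw [crp]; simp; omega
  | (n+2), j, hj => by
      rw [crp, crp_lt_one α N (n+1) (j-1) (by omega), crp_lt_one α N (n+1) j hj]
      ring

lemma crp_gt (α : ℝ) (N : ℕ) : ∀ i : ℕ, ∀ j : ℤ, (i : ℤ) < j → crp α N i j = 0
  | 0, j, _ => rfl
  | 1, j, hj => by
      rw [crp]; simp; omega
  | (n+2), j, hj => by
      rw [crp, crp_gt α N (n+1) (j-1) (by push_cast at hj ⊢; omega),
        crp_gt α N (n+1) j (by push_cast at hj ⊢; omega)]
      ring

lemma gstir_zero (α : ℝ) : ∀ i : ℕ, gstir (-1) α 0 (i+1) 0 = 0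
  | 0 => by rw [gstir, gstir]; norm_num
  | (n+1) => by rw [gstir, gstir_zero α n]; ring

lemma gstir_gt (α : ℝ) : ∀ i j : ℕ, i < j → gstir (-1) α 0 i j = 0
  | 0, (k+1), _ => by rw [gstir]
  | (n+1), (k+1), h => by
      rw [gstir, gstir_gt α n k (by omega), gstir_gt α n (k+1) (by omega)]
      ring

lemma risingFac_pos (x : ℝ) (hx : 0 < x) (n : ℕ) : 0 < risingFac x n := by
  apply Finset.prod_pos
  intro k _
  positivity

/-- for `α > 0`, `N ≥ 1` and `1 ≤ j ≤ i`,
`p(i,j) = (Nα|α)_j · S_α(i,j) / [Nα]_i`, where `S_α(i,j) := S(i,j; -1, α, 0)`. -/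
theorem statement13 (α : ℝ) (hα : 0 < α) (N : ℕ) (hN : 1 ≤ N) :
    ∀ i j : ℕ, 1 ≤ j → j ≤ i →
      crp α N i (j : ℤ) =
        genFall ((N : ℝ) * α) α j * gstir (-1) α 0 i j / risingFac ((N : ℝ) * α) i := by
  have hNα : 0 < (N : ℝ) * α := mul_pos (by exact_mod_cast hN) hα
  suffices h : ∀ i : ℕ, 1 ≤ i → ∀ j : ℕ,
      crp α N i (j : ℤ) =
        genFall ((N : ℝ) * α) α j * gstir (-1) α 0 i j / risingFac ((N : ℝ) * α) i by
    intro i j hj hij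
    exact h i (le_trans hj hij) j
  intro i
  induction i with
  | zero => omega
  | succ n ih =>
    intro _ j
    match n, j with
    | 0, 0 =>
        simp only [Nat.cast_zero, Nat.reduceAdd]
        rw [crp_lt_one α N 1 0 (by omega), gstir_zero α 0]
        simp
    | 0, 1 =>
        rw [crp]
        simp only [show ((1:ℕ):ℤ) = 1 from rfl, if_pos rfl]
        rw [show gstir (-1) α 0 1 1 = 1 by rw [gstir, gstir, gstir]; norm_num]
        rw [genFall, risingFac]
        simp [Finset.prod_range_one]
        field_simp
    | 0, (k+2) =>
        simp only [Nat.reduceAdd]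
        rw [show ((k+2:ℕ):ℤ) = (k:ℤ)+2 by push_cast; ring,
          crp_gt α N 1 ((k:ℤ)+2) (by omega), gstir_gt α 1 (k+2) (by omega)]
        simp
    | (m+1), 0 =>
        simp only [Nat.cast_zero]
        rw [show m+1+1 = m+2 from rfl, crp_lt_one α N (m+2) 0 (by omega), gstir_zero α (m+1)]
        simp
    | (m+1), (k+1) =>
        rw [show (((k+1:ℕ)):ℤ) = (k:ℤ) + 1 by push_cast; ring]
        rw [crp]
        rw [show ((k:ℤ) + 1 - 1) = (k:ℤ) from by ring]
        rw [ih (by omega) k, show ((k:ℤ)+1) = ((k+1:ℕ):ℤ) by push_cast; ring,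
          ih (by omega) (k+1)]
        rw [show gstir (-1) α 0 (m+1+1) (k+1)
            = gstir (-1) α 0 (m+1) k + (((k:ℝ)+1) * α - ((m+1:ℕ):ℝ) * (-1) + 0) * gstir (-1) α 0 (m+1) (k+1)
          from by rw [gstir]]
        have hF : genFall ((N : ℝ) * α) α (k+1) = genFall ((N : ℝ) * α) α k * ((N:ℝ)*α - k * α) :=
          Finset.prod_range_succ _ k
        have hR : risingFac ((N : ℝ) * α) (m+2) = risingFac ((N : ℝ) * α) (m+1) * ((N:ℝ)*α + (m+1)) := by
          unfold risingFac; rw [Finset.prod_range_succ]; push_cast; ring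
        have hRpos := risingFac_pos _ hNα (m+1)
        have hd : (N:ℝ)*α + ((m:ℝ)+1) ≠ 0 := by positivity
        rw [hF]
        rw [show ((m:ℕ)+1+1) = m+2 from rfl, hR]
        push_cast
        field_simp
        ring
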